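/- arXiv:1606.01294 — 2 statements merged into one kernel-verified Lean document; each statement's English description precedes it below -/
import Mathlib

section
/- Let F be a field and H a subgroup of GL₂(F) such that every element h of H has equal diagonal entries (h₁₁ = h₂₂). Then H is abelian. -/
/-- A subgroup of `GL₂` over a field in which every element has equal diagonal
entries is abelian. -/
theorem stmt_0 (F : Type*) [Field F] (H : Subgroup (GL (Fin 2) F))
    (hdiag : ∀ h ∈ H, (h : Matrix (Fin 2) (Fin 2) F) 0 0 =
      (h : Matrix (Fin 2) (Fin 2) F) 1 1) :
    ∀ a ∈ H, ∀ b ∈ H, a * b = b * a := by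
  have key : ∀ a ∈ H, ∀ b ∈ H,
      (a : Matrix (Fin 2) (Fin 2) F) 0 1 * (b : Matrix (Fin 2) (Fin 2) F) 1 0 =
      (a : Matrix (Fin 2) (Fin 2) F) 1 0 * (b : Matrix (Fin 2) (Fin 2) F) 0 1 := by
    intro a ha b hb
    have h1 := hdiag (a * b) (mul_mem ha hb)
    have h2 := hdiag a ha
    have h3 := hdiag b hb
    simp only [Units.val_mul, Matrix.mul_apply, Fin.sum_univ_two] at h1
    linear_combination h1 - (b : Matrix (Fin 2) (Fin 2) F) 0 0 * h2 -
      (a : Matrix (Fin 2) (Fin 2) F) 1 1 * h3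
  intro a ha b hb
  have hab := key a ha b hb
  have hba := key b hb a ha
  ext i j
  simp only [Units.val_mul, Matrix.mul_apply, Fin.sum_univ_two]
  have h2 := hdiag a ha
  have h3 := hdiag b hb
  fin_cases i <;> fin_cases j <;> simp only [Fin.mk_zero, Fin.mk_one]
  · linear_combination hab
  · linear_combination (b : Matrix (Fin 2) (Fin 2) F) 0 1 * h2 -
      (a : Matrix (Fin 2) (Fin 2) F) 0 1 * h3
  · linear_combination (a : Matrix (Fin 2) (Fin 2) F) 1 0 * h3 -
      (b : Matrix (Fin 2) (Fin 2) F) 1 0 * h2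
  · linear_combination -hab
end

section
/- Let F be a field of characteristic different from 2, G a group, ρ : G → GL₂(F) a group homomorphism, and c ∈ G an element with ρ(c) = diag(1, −1). Let H ≤ G be a subgroup such that G = H ∪ cH, and suppose tr ρ(cσ) = 0 for every σ ∈ H. Then ρ(H) is an abelian subgroup of GL₂(F). -/
/-- If `ρ : G → GL₂(F)`, `ρ c = diag(1,-1)`, `G = H ∪ cH`, and `tr ρ(cσ) = 0`
for all `σ ∈ H`, then `ρ(H)` is abelian (char F ≠ 2). -/
theorem stmt_1 (F : Type*) [Field F] (hchar : (2 : F) ≠ 0)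
    (G : Type*) [Group G] (ρ : G →* GL (Fin 2) F) (c : G)
    (hc : (ρ c : Matrix (Fin 2) (Fin 2) F) = !![1, 0; 0, -1])
    (H : Subgroup G)
    (hcover : ∀ g : G, g ∈ H ∨ ∃ h ∈ H, g = c * h)
    (htr : ∀ σ ∈ H, Matrix.trace (ρ (c * σ) : Matrix (Fin 2) (Fin 2) F) = 0) :
    ∀ a ∈ H, ∀ b ∈ H, ρ a * ρ b = ρ b * ρ a := by
  have key : ∀ σ ∈ H, (ρ σ : Matrix (Fin 2) (Fin 2) F) 0 0 =
      (ρ σ : Matrix (Fin 2) (Fin 2) F) 1 1 := by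
    intro σ hσ
    have h := htr σ hσ
    rw [map_mul] at h
    have hco : ((ρ c * ρ σ : GL (Fin 2) F) : Matrix (Fin 2) (Fin 2) F) =
        (ρ c : Matrix (Fin 2) (Fin 2) F) * (ρ σ : Matrix (Fin 2) (Fin 2) F) := rfl
    rw [hco, hc, Matrix.trace_fin_two] at h
    simp [Matrix.mul_apply, Fin.sum_univ_two] at h
    linear_combination h
  intro a ha b hb
  have hA := key a ha
  have hB := key b hb
  have hAB := key (a * b) (mul_mem ha hb)
  rw [map_mul] at hAB
  have hco : ∀ x y : GL (Fin 2) F, ((x * y : GL (Fin 2) F) : Matrix (Fin 2) (Fin 2) F) =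
      (x : Matrix (Fin 2) (Fin 2) F) * (y : Matrix (Fin 2) (Fin 2) F) := fun _ _ => rfl
  rw [hco] at hAB
  set M := (ρ a : Matrix (Fin 2) (Fin 2) F) with hM
  set N := (ρ b : Matrix (Fin 2) (Fin 2) F) with hN
  have hps : M 0 1 * N 1 0 = M 1 0 * N 0 1 := by
    have h00 : (M * N) 0 0 = M 0 0 * N 0 0 + M 0 1 * N 1 0 := by
      simp [Matrix.mul_apply, Fin.sum_univ_two]
    have h11 : (M * N) 1 1 = M 1 0 * N 0 1 + M 1 1 * N 1 1 := by
      simp [Matrix.mul_apply, Fin.sum_univ_two]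
    rw [h00, h11] at hAB
    rw [hA, hB] at hAB
    linear_combination hAB
  ext i j
  show ((ρ a * ρ b : GL (Fin 2) F) : Matrix (Fin 2) (Fin 2) F) i j =
      ((ρ b * ρ a : GL (Fin 2) F) : Matrix (Fin 2) (Fin 2) F) i j
  rw [hco, hco, ← hM, ← hN]
  fin_cases i <;> fin_cases j <;> simp [Matrix.mul_apply, Fin.sum_univ_two]
  · linear_combination hps
  · linear_combination N 0 1 * hA - M 0 1 * hB
  · linear_combination M 1 0 * hB - N 1 0 * hA
  · linear_combination -hps
end
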